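/- arXiv:1808.10414 — 2 statements merged into one kernel-verified Lean document; each statement's English description precedes it below -/
import Mathlib

section
/- Let n ≥ 2 and consider the map from (b, z₁, …, z_n) ∈ ℝ^{n+1} to the coefficients (a₀, a₁, …, a_n) of the polynomial b·∏_{j=1}^n (x − z_j) = Σ_{k=0}^n a_k x^k. The absolute value of the Jacobian determinant of this map equals |b|^n · ∏_{1 ≤ i < j ≤ n} |z_i − z_j|. -/
/-!
Column `0` of the Jacobian is `∂/∂b`, the coefficient vector of `Q = ∏ (X - z_j)`, and column
`j + 1` is `∂/∂z_j = -b` times the coefficient vector of `Q_j = ∏_{i ≠ j} (X - z_i)`, because the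
map is affine in each single variable. Only the first column has a nonzero entry in the top-degree
row, so expanding along it leaves `± (-b)^n det E`, where `E` is the `n × n` coefficient matrix of
the `Q_j`. Multiplying `E` by the Vandermonde matrix `V` of the `z_i` evaluates the `Q_j` at the
nodes, so `V E = diag (∏_{l ≠ i} (z_i - z_l))` and `|det V| |det E| = |det V|^2`. Hence
`|det E| = |det V|` when the `z_i` are distinct; otherwise two columns of `E` coincide and both
determinants vanish.
-/

open Polynomial Finset Lagrange

theorem Finset.prod_erase_eq_sq_prod_Ioi {α M : Type*} [CommMonoid M] [Fintype α] [LinearOrder α]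
    [LocallyFiniteOrderTop α] [LocallyFiniteOrderBot α] (g : α → α → M)
    (hg : ∀ i j, g i j = g j i) :
    ∏ i, ∏ j ∈ univ.erase i, g i j = (∏ i, ∏ j ∈ Ioi i, g i j) ^ 2 := by
  have hsplit : ∀ i : α, univ.erase i = Ioi i ∪ Iio i := fun i => by
    ext j
    simp [eq_comm]
  have hswap : ∏ i, ∏ j ∈ Iio i, g i j = ∏ i, ∏ j ∈ Ioi i, g i j := by
    rw [prod_comm' (t' := univ) (s' := Ioi) (fun i j => by simp)]
    exact prod_congr rfl fun i _ => prod_congr rfl fun j _ => hg j i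
  simp_rw [hsplit, prod_union (disjoint_Ioi_Iio _), prod_mul_distrib, hswap, sq]

theorem Finset.prod_filter_lt_eq_prod_Ioi {α M : Type*} [CommMonoid M] [Fintype α] [LinearOrder α]
    [LocallyFiniteOrderTop α] (f : α → α → M) :
    ∏ p ∈ univ.filter (fun p : α × α => p.1 < p.2), f p.1 p.2 =
      ∏ i, ∏ j ∈ Ioi i, f i j := by
  rw [prod_filter, Fintype.prod_prod_type]
  refine prod_congr rfl fun i _ => ?_
  rw [← prod_filter]
  congr 1
  ext j
  simp

namespace Matrix

theorem vandermonde_mul_of_coeff {R : Type*} [CommRing R] {n : ℕ} (z : Fin n → R)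
    (p : Fin n → R[X]) (hp : ∀ j, (p j).natDegree < n) :
    vandermonde z * of (fun (k j : Fin n) => (p j).coeff k) = of fun i j => (p j).eval (z i) := by
  ext i j
  rw [mul_apply, of_apply, eval_eq_sum_range' (hp j), ← Fin.sum_univ_eq_sum_range]
  exact sum_congr rfl fun k _ => mul_comm _ _

theorem abs_det_vandermonde {K : Type*} [Field K] [LinearOrder K] [IsStrictOrderedRing K]
    {n : ℕ} (z : Fin n → K) :
    |(vandermonde z).det| = ∏ i, ∏ j ∈ Ioi i, |z i - z j| := by
  simp_rw [det_vandermonde, abs_prod, abs_sub_comm]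

end Matrix

theorem Lagrange.nodal_update {R ι : Type*} [CommRing R] [DecidableEq ι] {s : Finset ι} {i : ι}
    (hi : i ∈ s) (v : ι → R) (t : R) :
    nodal s (Function.update v i t) = (X - C t) * nodal (s.erase i) v := by
  rw [nodal_eq_mul_nodal_erase hi, Function.update_self]
  congr 1
  exact prod_congr rfl fun j hj => by rw [Function.update_of_ne (ne_of_mem_erase hj)]

section Jacobian

variable {R : Type*} [CommRing R] {n : ℕ}

noncomputable def nodalEraseCoeffMatrix (z : Fin n → R) : Matrix (Fin n) (Fin n) R :=
  .of fun k j => (nodal (univ.erase j) z).coeff k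

theorem natDegree_nodal_erase_lt [Nontrivial R] (z : Fin n → R) (j : Fin n) :
    (nodal (univ.erase j) z).natDegree < n := by
  rw [natDegree_nodal, card_erase_of_mem (mem_univ j), card_univ, Fintype.card_fin]
  exact Nat.sub_lt (Fin.pos j) one_pos

theorem vandermonde_mul_nodalEraseCoeffMatrix [Nontrivial R] (z : Fin n → R) :
    Matrix.vandermonde z * nodalEraseCoeffMatrix z =
      Matrix.diagonal fun i => ∏ l ∈ univ.erase i, (z i - z l) := by
  rw [nodalEraseCoeffMatrix, Matrix.vandermonde_mul_of_coeff _ _ (natDegree_nodal_erase_lt z)]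
  ext i j
  rcases eq_or_ne i j with rfl | hij
  · simp [eval_nodal]
  · simp [hij, eval_nodal_at_node (mem_erase.2 ⟨hij, mem_univ i⟩)]

theorem det_nodalEraseCoeffMatrix_eq_zero {z : Fin n → R} (hz : ¬ Function.Injective z) :
    (nodalEraseCoeffMatrix z).det = 0 := by
  obtain ⟨a, b, hab, hne⟩ := Function.not_injective_iff.1 hz
  refine Matrix.det_zero_of_column_eq hne fun k => ?_
  simp only [nodalEraseCoeffMatrix, Matrix.of_apply]
  rw [nodal_eq_mul_nodal_erase (mem_erase.2 ⟨hne.symm, mem_univ b⟩),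
    nodal_eq_mul_nodal_erase (mem_erase.2 ⟨hne, mem_univ a⟩), erase_right_comm, hab]

theorem abs_det_nodalEraseCoeffMatrix {K : Type*} [Field K] [LinearOrder K]
    [IsStrictOrderedRing K] (z : Fin n → K) :
    |(nodalEraseCoeffMatrix z).det| = |(Matrix.vandermonde z).det| := by
  by_cases hz : Function.Injective z
  · have hV : |(Matrix.vandermonde z).det| ≠ 0 :=
      abs_ne_zero.2 (Matrix.det_vandermonde_ne_zero_iff.2 hz)
    have h := congrArg (fun A => |Matrix.det A|) (vandermonde_mul_nodalEraseCoeffMatrix z)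
    simp only [Matrix.det_mul, Matrix.det_diagonal, abs_mul, abs_prod] at h
    rw [prod_erase_eq_sq_prod_Ioi _ fun i j => abs_sub_comm (z i) (z j),
      ← Matrix.abs_det_vandermonde, sq] at h
    exact mul_left_cancel₀ hV h
  · rw [det_nodalEraseCoeffMatrix_eq_zero hz,
      Matrix.det_vandermonde_eq_zero_iff.2 (Function.not_injective_iff.1 hz)]

noncomputable def vietaJacobian (b : R) (z : Fin n → R) : Matrix (Fin (n + 1)) (Fin (n + 1)) R :=
  .of fun k c => Fin.cases ((nodal univ z).coeff k) (fun j => -b * (nodal (univ.erase j) z).coeff k) c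

theorem det_vietaJacobian [Nontrivial R] (b : R) (z : Fin n → R) :
    (vietaJacobian b z).det = b ^ n * (nodalEraseCoeffMatrix z).det := by
  rw [Matrix.det_succ_row _ (Fin.last n), sum_eq_single 0]
  · have hlead : (nodal univ z).coeff n = 1 := by
      simpa [natDegree_nodal] using (nodal_monic (s := univ) (v := z)).coeff_natDegree
    have hminor : (vietaJacobian b z).submatrix (Fin.last n).succAbove (Fin.succAbove 0) =
        -b • nodalEraseCoeffMatrix z := by
      ext k j
      simp [vietaJacobian, nodalEraseCoeffMatrix]
    rw [hminor, Matrix.det_smul]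
    simp only [vietaJacobian, Matrix.of_apply, Fin.val_last, Fin.val_zero, add_zero,
      Fin.cases_zero, hlead, Fintype.card_fin]
    rw [mul_one, ← mul_assoc, ← mul_pow, neg_one_mul, neg_neg]
  · intro c _ hc
    obtain ⟨j, rfl⟩ := Fin.exists_succ_eq.2 hc
    simp [vietaJacobian, coeff_eq_zero_of_natDegree_lt (natDegree_nodal_erase_lt z j)]
  · simp

end Jacobian

section Differentiability

variable {𝕜 E : Type*} [NontriviallyNormedField 𝕜] [NormedAddCommGroup E] [NormedSpace 𝕜 E]

theorem Polynomial.differentiable_coeff_mul {p q : E → 𝕜[X]}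
    (hp : ∀ k, Differentiable 𝕜 fun x => (p x).coeff k)
    (hq : ∀ k, Differentiable 𝕜 fun x => (q x).coeff k) (k : ℕ) :
    Differentiable 𝕜 fun x => (p x * q x).coeff k := by
  simp_rw [coeff_mul]
  exact Differentiable.fun_sum fun i _ => (hp i.1).mul (hq i.2)

theorem Polynomial.differentiable_coeff_prod {ι : Type*} (s : Finset ι) {p : ι → E → 𝕜[X]}
    (hp : ∀ i ∈ s, ∀ k, Differentiable 𝕜 fun x => (p i x).coeff k) (k : ℕ) :
    Differentiable 𝕜 fun x => (∏ i ∈ s, p i x).coeff k := by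
  induction s using Finset.cons_induction generalizing k with
  | empty => simp only [prod_empty]; exact differentiable_const _
  | cons a s _ ih =>
    simp_rw [prod_cons]
    exact differentiable_coeff_mul (hp a (mem_cons_self a s))
      (ih fun i hi => hp i (mem_cons_of_mem hi)) k

theorem Lagrange.differentiable_coeff_nodal {ι : Type*} [Fintype ι] (s : Finset ι) (k : ℕ) :
    Differentiable 𝕜 fun z : ι → 𝕜 => (nodal s z).coeff k := by
  refine differentiable_coeff_prod s (fun i _ k => ?_) k
  simp only [coeff_sub, coeff_X, coeff_C]
  split_ifs <;> fun_prop

theorem DifferentiableAt.hasDerivAt_update {ι G : Type*} [Fintype ι] [DecidableEq ι]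
    [NormedAddCommGroup G] [NormedSpace 𝕜 G] {f : (ι → 𝕜) → G} {v : ι → 𝕜}
    (hf : DifferentiableAt 𝕜 f v) (i : ι) :
    HasDerivAt (fun t => f (Function.update v i t)) (fderiv 𝕜 f v (Pi.single i 1)) (v i) := by
  have hf' : HasFDerivAt f (fderiv 𝕜 f v) (Function.update v i (v i)) := by
    rw [Function.update_eq_self]
    exact hf.hasFDerivAt
  exact hf'.comp_hasDerivAt (v i) (_root_.hasDerivAt_update v i (v i))

end Differentiability

section VietaMap

variable {𝕜 : Type*} [NontriviallyNormedField 𝕜] {n : ℕ}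

noncomputable def vietaMap (n : ℕ) (v : Fin (n + 1) → 𝕜) : Fin (n + 1) → 𝕜 :=
  fun k => v 0 * (nodal univ (Fin.tail v)).coeff k

theorem differentiable_vietaMap : Differentiable 𝕜 (vietaMap (𝕜 := 𝕜) n) := by
  refine differentiable_pi.2 fun k => (differentiable_apply 0).mul ?_
  have htail : Differentiable 𝕜 fun v : Fin (n + 1) → 𝕜 => (Fin.tail v : Fin n → 𝕜) :=
    differentiable_pi.2 fun i => differentiable_apply i.succ
  exact (differentiable_coeff_nodal univ k).comp htail

theorem toMatrix'_fderiv_vietaMap (v : Fin (n + 1) → 𝕜) :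
    LinearMap.toMatrix' (fderiv 𝕜 (vietaMap n) v).toLinearMap =
      vietaJacobian (v 0) (Fin.tail v) := by
  ext k c
  rw [LinearMap.toMatrix'_apply]
  refine (hasDerivAt_pi.1 ((differentiable_vietaMap v).hasDerivAt_update c) k).unique ?_
  cases c using Fin.cases with
  | zero =>
    simp only [vietaMap, Function.update_self, Fin.tail_update_zero, vietaJacobian,
      Matrix.of_apply, Fin.cases_zero]
    exact hasDerivAt_mul_const _
  | succ j =>
    simp only [vietaMap, Function.update_of_ne (Fin.succ_ne_zero j).symm, Fin.tail_update_succ,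
      nodal_update (mem_univ j), vietaJacobian, Matrix.of_apply, Fin.cases_succ, sub_mul,
      coeff_sub, coeff_C_mul]
    set Q := nodal (univ.erase j) (Fin.tail v)
    have h := (((hasDerivAt_id' (v j.succ)).mul_const (Q.coeff k)).const_sub
      ((X * Q).coeff k)).const_mul (v 0)
    exact h.congr_deriv (by ring)

end VietaMap

theorem stmt5_general (n : ℕ)
    (F : (Fin (n + 1) → ℝ) → (Fin (n + 1) → ℝ))
    (hF : ∀ v k, F v k =
      (Polynomial.C (v 0) * ∏ j : Fin n, (Polynomial.X - Polynomial.C (v j.succ))).coeff k) :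
    ∀ v : Fin (n + 1) → ℝ,
      |LinearMap.det ((fderiv ℝ F v).toLinearMap)| =
        |v 0| ^ n *
          ∏ p ∈ Finset.univ.filter (fun p : Fin n × Fin n => p.1 < p.2),
            |v p.1.succ - v p.2.succ| := by
  have hF_eq : F = vietaMap n := by
    ext v k
    rw [hF, coeff_C_mul]
    rfl
  intro v
  rw [hF_eq, ← LinearMap.det_toMatrix', toMatrix'_fderiv_vietaMap, det_vietaJacobian, abs_mul,
    abs_pow, abs_det_nodalEraseCoeffMatrix, Matrix.abs_det_vandermonde,
    prod_filter_lt_eq_prod_Ioi fun i j : Fin n => |v i.succ - v j.succ|]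
  rfl

/-- The absolute Jacobian of the map `(b, z₁, …, z_n) ↦ (a₀, …, a_n)` of coefficients of
`b ∏ (x - z_j)` equals `|b|^n ∏_{i<j} |z_i - z_j|`. -/
theorem stmt5 (n : ℕ) (hn : 2 ≤ n)
    (F : (Fin (n + 1) → ℝ) → (Fin (n + 1) → ℝ))
    (hF : ∀ v k, F v k =
      (Polynomial.C (v 0) * ∏ j : Fin n, (Polynomial.X - Polynomial.C (v j.succ))).coeff k) :
    ∀ v : Fin (n + 1) → ℝ,
      |LinearMap.det ((fderiv ℝ F v).toLinearMap)| =
        |v 0| ^ n *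
          ∏ p ∈ Finset.univ.filter (fun p : Fin n × Fin n => p.1 < p.2),
            |v p.1.succ - v p.2.succ| :=
  stmt5_general n F hF
end

section
/- Let n ≥ 2 and for δ ≥ 0 define f₀(δ) as the (n+1)-dimensional Lebesgue measure of the set of coefficient vectors a ∈ ℝ^{n+1} such that the polynomial Σ a_j x^j has degree n and all roots real, h(a) ≤ 1, and |D(a)| ≤ δ, where h is a height function and D the discriminant. Then f₀ is continuous, monotonically nondecreasing, and f₀(0) = lim_{δ→0⁺} f₀(δ) = 0. -/
/-!
The discriminant is a nonzero homogeneous polynomial of positive degree, so each of its level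
sets, and hence each level set of `|D|`, is the zero set of a nonzero polynomial and is Lebesgue
null (induction on the number of variables, via Fubini). The height `h` is bounded below by a
multiple of the norm, so the totally real polynomials of height at most `1` form a set `S` of
finite measure. Thus `f₀` is the distribution function of the finite atomless measure obtained by
pushing `volume` restricted to `S` forward along `|D|`, and such a distribution function is
continuous.
-/

open MeasureTheory Set Filter Topology

theorem MvPolynomial.volume_setOf_eval_eq_zero {m : ℕ} {p : MvPolynomial (Fin m) ℝ}
    (hp : p ≠ 0) : volume {x | eval x p = 0} = 0 := by
  induction m with
  | zero =>
    obtain ⟨c, rfl⟩ := C_surjective (Fin 0) p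
    have hc : c ≠ 0 := by simpa using hp
    simp [hc]
  | succ m ih =>
    set q := finSuccEquiv ℝ m p
    have hq : q ≠ 0 := by simpa [q] using hp
    have hfibre : ∀ᵐ s : Fin m → ℝ, volume {y : ℝ | eval (Fin.cons y s) p = 0} = 0 := by
      filter_upwards [measure_eq_zero_iff_ae_notMem.1 (ih (Polynomial.leadingCoeff_ne_zero.2 hq))]
        with s hs
      have hqs : q.map (eval s) ≠ 0 := fun h0 => hs <| by
        simpa [Polynomial.coeff_map] using congrArg (·.coeff q.natDegree) h0
      simp_rw [eval_eq_eval_mv_eval']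
      exact (Polynomial.finite_setOfPred_isRoot hqs).measure_zero _
    let e := (MeasurableEquiv.piFinSuccAbove (fun _ : Fin (m + 1) => ℝ) 0).symm
    have hZ : MeasurableSet {x : Fin (m + 1) → ℝ | eval x p = 0} :=
      (isClosed_eq (continuous_eval p) continuous_const).measurableSet
    have he : e ⁻¹' {x | eval x p = 0} = {ys | eval (Fin.cons ys.1 ys.2) p = 0} := by
      ext ys
      simp [e, MeasurableEquiv.piFinSuccAbove_symm_apply, Fin.consEquiv]
    rw [← (volume_preserving_piFinSuccAbove (fun _ : Fin (m + 1) => ℝ) 0).symm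
      |>.measure_preimage_equiv, he, Measure.volume_eq_prod,
      Measure.prod_apply_symm (he ▸ e.measurable hZ)]
    exact (lintegral_congr_ae hfibre).trans lintegral_zero

theorem MvPolynomial.IsHomogeneous.volume_setOf_abs_eval_eq {m d : ℕ}
    {p : MvPolynomial (Fin m) ℝ} (hhom : p.IsHomogeneous d) (hp : p ≠ 0) (hd : d ≠ 0) (t : ℝ) :
    volume {x | |eval x p| = t} = 0 := by
  have hlevel : ∀ s, volume {x | eval x p = s} = 0 := fun s => by
    have hps : p - C s ≠ 0 := fun hps =>
      hd (hhom.inj_right (sub_eq_zero.1 hps ▸ isHomogeneous_C _ s) hp)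
    simpa [sub_eq_zero] using volume_setOf_eval_eq_zero hps
  exact measure_mono_null (fun x hx => eq_or_eq_neg_of_abs_eq hx)
    (measure_union_null (hlevel t) (hlevel (-t)))

namespace MeasureTheory

theorem measureReal_Iic_sub_measureReal_Iic {ν : Measure ℝ} [IsFiniteMeasure ν] {x y : ℝ}
    (hxy : x ≤ y) : ν.real (Iic y) - ν.real (Iic x) = ν.real (Ioc x y) := by
  rw [← Iic_sdiff_Iic, measureReal_sdiff (Iic_subset_Iic.2 hxy) measurableSet_Iic]

theorem abs_measureReal_Iic_sub_le {ν : Measure ℝ} [IsFiniteMeasure ν] {x y r : ℝ}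
    (hxy : |y - x| ≤ r) : |ν.real (Iic y) - ν.real (Iic x)| ≤ ν.real (Icc (x - r) (x + r)) := by
  obtain ⟨hlo, hhi⟩ := abs_le.1 hxy
  rcases le_total x y with hle | hle
  · rw [measureReal_Iic_sub_measureReal_Iic hle, abs_of_nonneg measureReal_nonneg]
    exact measureReal_mono (Ioc_subset_Icc_self.trans (Icc_subset_Icc (by linarith) (by linarith)))
  · rw [abs_sub_comm, measureReal_Iic_sub_measureReal_Iic hle, abs_of_nonneg measureReal_nonneg]
    exact measureReal_mono (Ioc_subset_Icc_self.trans (Icc_subset_Icc (by linarith) (by linarith)))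

theorem tendsto_measureReal_Icc_nhdsGT_zero {ν : Measure ℝ} [IsFiniteMeasure ν]
    [NullSingletonClass ν] (x : ℝ) :
    Tendsto (fun r => ν.real (Icc (x - r) (x + r))) (𝓝[>] 0) (𝓝 0) := by
  have hball : Tendsto (fun r => ν (Metric.cthickening r {x})) (𝓝 0) (𝓝 0) := by
    simpa using tendsto_measure_cthickening_of_isCompact (μ := ν) isCompact_singleton
  refine ((ENNReal.tendsto_toReal ENNReal.zero_ne_top).comp
    (hball.mono_left nhdsWithin_le_nhds)).congr' ?_
  filter_upwards [self_mem_nhdsWithin] with r (hr : 0 < r)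
  rw [Function.comp_apply, Metric.cthickening_singleton x hr.le, Real.closedBall_eq_Icc]
  rfl

theorem continuous_measureReal_Iic (ν : Measure ℝ) [IsFiniteMeasure ν] [NullSingletonClass ν] :
    Continuous fun x => ν.real (Iic x) := by
  refine Metric.continuous_iff.2 fun x ε hε => ?_
  obtain ⟨r, hrε, hr⟩ := (((tendsto_measureReal_Icc_nhdsGT_zero (ν := ν) x).eventually
    (gt_mem_nhds hε)).and self_mem_nhdsWithin).exists
  refine ⟨r, hr, fun y hy => ?_⟩
  rw [Real.dist_eq] at hy ⊢
  exact (abs_measureReal_Iic_sub_le hy.le).trans_lt hrε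

end MeasureTheory

theorem exists_pos_mul_norm_le_of_homogeneous {E : Type*} [NormedAddCommGroup E]
    [NormedSpace ℝ E] [ProperSpace E] [Nontrivial E] {h : E → ℝ} (hcont : Continuous h)
    (hhom : ∀ (t : ℝ) (v : E), h (t • v) = |t| * h v) (hpos : ∀ v, v ≠ 0 → 0 < h v) :
    ∃ c > 0, ∀ v, c * ‖v‖ ≤ h v := by
  obtain ⟨u, hu, hmin⟩ := (isCompact_sphere (0 : E) 1).exists_isMinOn
    (NormedSpace.sphere_nonempty.2 zero_le_one) hcont.continuousOn
  refine ⟨h u, hpos u (ne_zero_of_mem_unit_sphere ⟨u, hu⟩), fun v => ?_⟩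
  rcases eq_or_ne v 0 with rfl | hv
  · have h0 : h 0 = 0 := by simpa using hhom 0 0
    simp [h0]
  have hunit : ‖v‖⁻¹ • v ∈ Metric.sphere (0 : E) 1 := by
    rw [mem_sphere_zero_iff_norm, norm_smul, norm_inv, norm_norm,
      inv_mul_cancel₀ (norm_ne_zero_iff.2 hv)]
  calc h u * ‖v‖ ≤ h (‖v‖⁻¹ • v) * ‖v‖ := by gcongr; exact hmin hunit
    _ = h v := by rw [hhom, abs_inv, abs_norm]; field_simp

theorem isBounded_setOf_le_of_homogeneous {E : Type*} [NormedAddCommGroup E]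
    [NormedSpace ℝ E] [ProperSpace E] [Nontrivial E] {h : E → ℝ} (hcont : Continuous h)
    (hhom : ∀ (t : ℝ) (v : E), h (t • v) = |t| * h v) (hpos : ∀ v, v ≠ 0 → 0 < h v) (r : ℝ) :
    Bornology.IsBounded {v | h v ≤ r} := by
  obtain ⟨c, hc, hle⟩ := exists_pos_mul_norm_le_of_homogeneous hcont hhom hpos
  refine (Metric.isBounded_closedBall (x := 0) (r := r / c)).subset fun v hv => ?_
  rw [mem_closedBall_zero_iff, le_div_iff₀' hc]
  exact (hle v).trans hv

/-- The distribution function `f₀(δ)` of the discriminant over totally real polynomials of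
height at most 1 is continuous, monotone, vanishes at `0`, and tends to `0` as `δ → 0⁺`. -/
theorem stmt19 (n : ℕ) (hn : 2 ≤ n)
    (h : (Fin (n + 1) → ℝ) → ℝ) (hcont : Continuous h) (hnonneg : ∀ v, 0 ≤ h v)
    (hhom : ∀ (t : ℝ) (v : Fin (n + 1) → ℝ), h (t • v) = |t| * h v)
    (hzero : ∀ v, h v = 0 ↔ v = 0)
    (p : MvPolynomial (Fin (n + 1)) ℝ) (hp : p ≠ 0)
    (hdeg : p.IsHomogeneous (2 * n - 2))
    (D : (Fin (n + 1) → ℝ) → ℝ) (hD : ∀ a, D a = MvPolynomial.eval a p)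
    (f₀ : ℝ → ℝ)
    (hf₀ : ∀ δ : ℝ, f₀ δ = (volume {a : Fin (n + 1) → ℝ |
        a (Fin.last n) ≠ 0 ∧
        (∃ α : Fin n → ℝ, ∀ x : ℝ, (∑ k : Fin (n + 1), a k * x ^ (k : ℕ)) =
          a (Fin.last n) * ∏ j : Fin n, (x - α j)) ∧
        h a ≤ 1 ∧ |D a| ≤ δ}).toReal) :
    Continuous f₀ ∧ Monotone f₀ ∧ f₀ 0 = 0 ∧
      Filter.Tendsto f₀ (nhdsWithin 0 (Set.Ioi 0)) (nhds 0) := by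
  obtain rfl : D = fun a => MvPolynomial.eval a p := funext hD
  set S := {a : Fin (n + 1) → ℝ | a (Fin.last n) ≠ 0 ∧
    (∃ α : Fin n → ℝ, ∀ x : ℝ, (∑ k : Fin (n + 1), a k * x ^ (k : ℕ)) =
      a (Fin.last n) * ∏ j : Fin n, (x - α j)) ∧ h a ≤ 1}
  have hpos : ∀ v, v ≠ 0 → 0 < h v := fun v hv => (hnonneg v).lt_of_ne' (mt (hzero v).1 hv)
  have hS : volume S ≠ ⊤ := ((isBounded_setOf_le_of_homogeneous hcont hhom hpos 1).subset
    fun a ha => ha.2.2).measure_lt_top.ne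
  have hd : 2 * n - 2 ≠ 0 := by omega
  have hDm : Measurable fun a => |MvPolynomial.eval a p| :=
    (MvPolynomial.continuous_eval p).abs.measurable
  let ν := (volume.restrict S).map fun a => |MvPolynomial.eval a p|
  have : IsFiniteMeasure (volume.restrict S) := isFiniteMeasure_restrict.2 hS
  have : NullSingletonClass ν := ⟨fun t => by
    rw [Measure.map_apply hDm (measurableSet_singleton t)]
    exact nonpos_iff_eq_zero.1 ((Measure.restrict_apply_le _ _).trans_eq
      (hdeg.volume_setOf_abs_eval_eq hp hd t))⟩
  have hf : ∀ δ, f₀ δ = ν.real (Iic δ) := by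
    intro δ
    rw [hf₀, measureReal_def, Measure.map_apply hDm measurableSet_Iic,
      Measure.restrict_apply (hDm measurableSet_Iic)]
    congr 2
    ext a
    simp only [S, mem_ofPred_eq, mem_inter_iff, mem_preimage, mem_Iic]
    tauto
  have hco : Continuous f₀ := (continuous_measureReal_Iic ν).congr fun δ => (hf δ).symm
  have h0 : f₀ 0 = 0 := by
    rw [hf₀, measure_mono_null (fun a ha => ha.2.2.2.antisymm (abs_nonneg _))
      (hdeg.volume_setOf_abs_eval_eq hp hd 0), ENNReal.toReal_zero]
  refine ⟨hco, fun x y hxy => ?_, h0, ?_⟩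
  · rw [hf, hf]
    exact measureReal_mono (Iic_subset_Iic.2 hxy)
  · simpa only [h0] using (hco.continuousWithinAt (s := Ioi 0) (x := 0)).tendsto
end
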